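/- arXiv:1909.12628 — 2 statements merged into one kernel-verified Lean document; each statement's English description precedes it below -/
import Mathlib

section
/- For an end tangle τ of a graph G, the following are equivalent: (i) τ is closed in the separation topology on S⃗; (ii) τ has an absolute decider K ⊆ V; (iii) τ has an ℵ₀-block as absolute decider. -/
open Set

universe u

/-- A separation of a graph `G`: a pair of vertex sets covering `V` with no
edge between `A \ B` and `B \ A`. -/
structure Separation {V : Type u} (G : SimpleGraph V) where
  A : Set V
  B : Set V
  union_eq : A ∪ B = Set.univ
  no_edge : ∀ a ∈ A \ B, ∀ b ∈ B \ A, ¬ G.Adj a b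

/-- The oriented separations of finite order. -/
abbrev FinSep {V : Type u} (G : SimpleGraph V) := {s : Separation G // (s.A ∩ s.B).Finite}

/-- The separation topology: basic open sets prescribe the restriction of a
separation to a finite vertex set `Z`. -/
instance sepTop {V : Type u} (G : SimpleGraph V) : TopologicalSpace (FinSep G) :=
  TopologicalSpace.generateFrom
    {O | ∃ Z AZ BZ : Set V, Z.Finite ∧
      O = {s : FinSep G | s.1.A ∩ Z = AZ ∧ s.1.B ∩ Z = BZ}}

/-- The reverse orientation of a finite-order separation. -/
def FinSep.rev {V : Type u} {G : SimpleGraph V} (s : FinSep G) : FinSep G :=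
  ⟨⟨s.1.B, s.1.A, by rw [Set.union_comm]; exact s.1.union_eq,
    fun a ha b hb h => s.1.no_edge b hb a ha h.symm⟩,
   by rw [Set.inter_comm]; exact s.2⟩

/-- A ray in a graph: an injective sequence of successively adjacent vertices. -/
structure GraphRay {V : Type u} (G : SimpleGraph V) where
  f : ℕ → V
  inj : Function.Injective f
  adj : ∀ n, G.Adj (f n) (f (n + 1))

/-- Two rays are equivalent if no finite vertex set separates them. -/
def RayEquiv {V : Type u} (G : SimpleGraph V) (R R' : GraphRay G) : Prop :=
  ∀ F : Set V, F.Finite →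
    ∃ (m n : ℕ) (w : G.Walk (R.f m) (R'.f n)), ∀ x ∈ w.support, x ∉ F

/-- An end of a graph: a (nonempty) equivalence class of rays. -/
structure GraphEnd {V : Type u} (G : SimpleGraph V) where
  rays : Set (GraphRay G)
  nonempty : rays.Nonempty
  mem_iff : ∀ R ∈ rays, ∀ R', R' ∈ rays ↔ RayEquiv G R R'

/-- A ray has a tail in `B`. -/
def HasTailIn {V : Type u} {G : SimpleGraph V} (R : GraphRay G) (B : Set V) : Prop :=
  ∃ N, ∀ n ≥ N, R.f n ∈ B

/-- The end tangle induced by the end `ω`: all finite-order separations `(A,B)`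
such that every ray of `ω` has a tail in `B`. -/
def endTangle {V : Type u} {G : SimpleGraph V} (ω : GraphEnd G) : Set (FinSep G) :=
  {s | ∀ R ∈ ω.rays, HasTailIn R s.1.B}

/-- `v` dominates the end `ω`: `v` sends infinitely many paths to a ray of `ω`
which pairwise meet only in `v`. -/
def Dominates {V : Type u} (G : SimpleGraph V) (v : V) (ω : GraphEnd G) : Prop :=
  ∃ R ∈ ω.rays, ∃ p : ℕ → (n : ℕ) × G.Walk v (R.f n),
    (∀ i, (p i).2.IsPath) ∧ (Function.Injective fun i => (p i).1) ∧
    ∀ i j, i ≠ j → ∀ x, x ∈ (p i).2.support → x ∈ (p j).2.support → x = v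

/-- The end `ω` has (vertex) degree at least `m`: there are `m` pairwise
disjoint rays belonging to `ω`. -/
def DegGE {V : Type u} (G : SimpleGraph V) (ω : GraphEnd G) (m : ℕ) : Prop :=
  ∃ R : Fin m → GraphRay G, (∀ i, R i ∈ ω.rays) ∧
    ∀ i j, i ≠ j → Disjoint (Set.range (R i).f) (Set.range (R j).f)

/-- At least `n` vertices dominate `ω`. -/
def DomGE {V : Type u} (G : SimpleGraph V) (ω : GraphEnd G) (n : ℕ) : Prop :=
  ∃ D : Finset V, D.card = n ∧ ∀ v ∈ D, Dominates G v ω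

/-- `deg(ω) + dom(ω) ≥ k`. -/
def DegDomGE {V : Type u} (G : SimpleGraph V) (ω : GraphEnd G) (k : ℕ) : Prop :=
  ∃ m n, m + n = k ∧ DegGE G ω m ∧ DomGE G ω n

/-- `T` separates `X` from the end `ω`: every ray of `ω` meeting `X` meets `T`. -/
def SeparatesFromEnd {V : Type u} (G : SimpleGraph V) (X T : Set V) (ω : GraphEnd G) : Prop :=
  ∀ R ∈ ω.rays, (∃ n, R.f n ∈ X) → ∃ n, R.f n ∈ T

/-- `K` is `(<ℵ₀)`-inseparable (apart from the infiniteness requirement): no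
finite-order separation separates two of its vertices. -/
def FinInseparable {V : Type u} (G : SimpleGraph V) (K : Set V) : Prop :=
  ∀ s : FinSep G, ∀ x ∈ K, ∀ y ∈ K, ¬(x ∈ s.1.A \ s.1.B ∧ y ∈ s.1.B \ s.1.A)

/-- An `ℵ₀`-block: a maximal infinite set of vertices no two of which can be
separated by a finite-order separation. -/
def Aleph0Block {V : Type u} (G : SimpleGraph V) (K : Set V) : Prop :=
  K.Infinite ∧ FinInseparable G K ∧
    ∀ K' : Set V, K ⊆ K' → K'.Infinite → FinInseparable G K' → K' = K

section Aux

variable {V : Type u} {G : SimpleGraph V}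

lemma memA_of_notMemB (s : Separation G) {x : V} (h : x ∉ s.B) : x ∈ s.A := by
  have hx : x ∈ s.A ∪ s.B := by rw [s.union_eq]; trivial
  rcases hx with h' | h'
  · exact h'
  · exact absurd h' h

/-- Along a walk avoiding the separator, the side cannot change. -/
lemma sep_side (s : Separation G) :
    ∀ {u v : V} (w : G.Walk u v),
      (∀ x ∈ w.support, x ∉ s.A ∩ s.B) → u ∈ s.B \ s.A → v ∈ s.B \ s.A := by
  intro u v w
  induction w with
  | nil => exact fun _ hu => hu
  | @cons a b c h p ih =>
    intro hsup ha
    have hbsup : b ∈ (SimpleGraph.Walk.cons h p).support :=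
      List.mem_cons_of_mem _ p.start_mem_support
    have hb : b ∉ s.A ∩ s.B := hsup b hbsup
    have hb' : b ∈ s.B \ s.A := by
      by_cases hbB : b ∈ s.B
      · exact ⟨hbB, fun hbA => hb ⟨hbA, hbB⟩⟩
      · have hbA : b ∈ s.A := memA_of_notMemB s hbB
        exact absurd h.symm (s.no_edge b ⟨hbA, hbB⟩ a ha)
    exact ih (fun x hx => hsup x (List.mem_cons_of_mem _ hx)) hb'

/-- Every ray has a tail strictly on one side of a finite-order separation. -/
lemma ray_dichotomy (s : FinSep G) (R : GraphRay G) :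
    ∃ N, (∀ n, N ≤ n → R.f n ∈ s.1.A \ s.1.B) ∨ (∀ n, N ≤ n → R.f n ∈ s.1.B \ s.1.A) := by
  have hfin : (R.f ⁻¹' (s.1.A ∩ s.1.B)).Finite := s.2.preimage R.inj.injOn
  obtain ⟨b, hb⟩ := hfin.bddAbove
  set N := b + 1 with hN
  have hout : ∀ n, N ≤ n → R.f n ∉ s.1.A ∩ s.1.B := by
    intro n hn hmem
    have := hb hmem
    omega
  have hside : ∀ n, N ≤ n → R.f n ∈ s.1.A \ s.1.B ∨ R.f n ∈ s.1.B \ s.1.A := by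
    intro n hn
    have h1 : R.f n ∈ s.1.A ∪ s.1.B := by rw [s.1.union_eq]; trivial
    have h2 := hout n hn
    rcases h1 with h | h
    · exact Or.inl ⟨h, fun hB => h2 ⟨h, hB⟩⟩
    · exact Or.inr ⟨h, fun hA => h2 ⟨hA, h⟩⟩
  have hstepA : ∀ n, N ≤ n → R.f n ∈ s.1.A \ s.1.B → R.f (n + 1) ∈ s.1.A \ s.1.B := by
    intro n hn h
    rcases hside (n + 1) (by omega) with h' | h'
    · exact h'
    · exact absurd (R.adj n) (s.1.no_edge _ h _ h')
  have hstepB : ∀ n, N ≤ n → R.f n ∈ s.1.B \ s.1.A → R.f (n + 1) ∈ s.1.B \ s.1.A := by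
    intro n hn h
    rcases hside (n + 1) (by omega) with h' | h'
    · exact absurd (R.adj n).symm (s.1.no_edge _ h' _ h)
    · exact h'
  refine ⟨N, ?_⟩
  rcases hside N le_rfl with h | h
  · left
    intro n hn
    induction n, hn using Nat.le_induction with
    | base => exact h
    | succ n hn ih => exact hstepA n hn ih
  · right
    intro n hn
    induction n, hn using Nat.le_induction with
    | base => exact h
    | succ n hn ih => exact hstepB n hn ih

/-- Two equivalent rays cannot have tails on opposite strict sides. -/
lemma no_transfer (ω : GraphEnd G) (s : FinSep G) {R R' : GraphRay G}
    (hR : R ∈ ω.rays) (hR' : R' ∈ ω.rays) {N N' : ℕ}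
    (h : ∀ n, N ≤ n → R.f n ∈ s.1.B \ s.1.A)
    (h' : ∀ n, N' ≤ n → R'.f n ∈ s.1.A \ s.1.B) : False := by
  have hequiv : RayEquiv G R R' := (ω.mem_iff R hR R').mp hR'
  set F := ((s.1.A ∩ s.1.B) ∪ R.f '' Set.Iio N) ∪ R'.f '' Set.Iio N' with hF
  have hFfin : F.Finite :=
    (s.2.union ((Set.finite_Iio N).image R.f)).union ((Set.finite_Iio N').image R'.f)
  obtain ⟨m, n, w, hw⟩ := hequiv F hFfin
  have hm : N ≤ m := by
    by_contra hlt
    push_neg at hlt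
    exact hw _ w.start_mem_support (Or.inl (Or.inr ⟨m, hlt, rfl⟩))
  have hn : N' ≤ n := by
    by_contra hlt
    push_neg at hlt
    exact hw _ w.end_mem_support (Or.inr ⟨n, hlt, rfl⟩)
  have hend := sep_side s.1 w (fun x hx hmem => hw x hx (Or.inl (Or.inl hmem))) (h m hm)
  exact (h' n hn).2 hend.1

/-- Every finite-order separation is oriented by the end tangle. -/
lemma orient (ω : GraphEnd G) (s : FinSep G) :
    s ∈ endTangle ω ∨ s.rev ∈ endTangle ω := by
  obtain ⟨R₀, hR₀⟩ := ω.nonempty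
  obtain ⟨N₀, hd⟩ := ray_dichotomy s R₀
  rcases hd with hA | hB
  · right
    intro R' hR'
    obtain ⟨N', hd'⟩ := ray_dichotomy s R'
    rcases hd' with h' | h'
    · exact ⟨N', fun n hn => (h' n hn).1⟩
    · exact (no_transfer ω s hR' hR₀ h' hA).elim
  · left
    intro R' hR'
    obtain ⟨N', hd'⟩ := ray_dichotomy s R'
    rcases hd' with h' | h'
    · exact (no_transfer ω s hR₀ hR' hB h').elim
    · exact ⟨N', fun n hn => (h' n hn).1⟩

lemma tau_mono (ω : GraphEnd G) {t u : FinSep G} (ht : t ∈ endTangle ω)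
    (h : t.1.B ⊆ u.1.B) : u ∈ endTangle ω := by
  intro R hR
  obtain ⟨N, hN⟩ := ht R hR
  exact ⟨N, fun n hn => h (hN n hn)⟩

/-- The trivial separation `(∅, V)`. -/
def topSep : FinSep G :=
  ⟨⟨∅, Set.univ, by simp, fun a ha => absurd ha.1 (Set.notMem_empty a)⟩, by simp⟩

lemma top_mem (ω : GraphEnd G) : (topSep : FinSep G) ∈ endTangle ω :=
  fun _ _ => ⟨0, fun _ _ => Set.mem_univ _⟩

/-- The meet of two finite-order separations. -/
def meetSep (s t : FinSep G) : FinSep G :=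
  ⟨⟨s.1.A ∪ t.1.A, s.1.B ∩ t.1.B,
    by
      apply Set.eq_univ_of_forall
      intro x
      by_cases hs : x ∈ s.1.B
      · by_cases ht : x ∈ t.1.B
        · exact Or.inr ⟨hs, ht⟩
        · exact Or.inl (Or.inr (memA_of_notMemB t.1 ht))
      · exact Or.inl (Or.inl (memA_of_notMemB s.1 hs)),
    by
      intro a ha b hb hadj
      by_cases haB : a ∈ s.1.B
      · have haB' : a ∉ t.1.B := fun h => ha.2 ⟨haB, h⟩
        exact t.1.no_edge a ⟨memA_of_notMemB t.1 haB', haB'⟩ b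
          ⟨hb.1.2, fun h => hb.2 (Or.inr h)⟩ hadj
      · exact s.1.no_edge a ⟨memA_of_notMemB s.1 haB, haB⟩ b
          ⟨hb.1.1, fun h => hb.2 (Or.inl h)⟩ hadj⟩,
    (s.2.union t.2).subset (by
      rintro x ⟨hA, hB⟩
      rcases hA with h | h
      · exact Or.inl ⟨h, hB.1⟩
      · exact Or.inr ⟨h, hB.2⟩)⟩

lemma meet_mem (ω : GraphEnd G) {s t : FinSep G} (hs : s ∈ endTangle ω)
    (ht : t ∈ endTangle ω) : meetSep s t ∈ endTangle ω := by
  intro R hR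
  obtain ⟨N, hN⟩ := hs R hR
  obtain ⟨M, hM⟩ := ht R hR
  exact ⟨max N M, fun n hn =>
    ⟨hN n (le_trans (le_max_left _ _) hn), hM n (le_trans (le_max_right _ _) hn)⟩⟩

lemma exists_avoid' (ω : GraphEnd G) (Fs : Finset V) :
    (∀ v ∈ Fs, ∃ t ∈ endTangle ω, v ∉ t.1.B) →
    ∃ w ∈ endTangle ω, ∀ v ∈ Fs, v ∉ w.1.B := by
  classical
  induction Fs using Finset.induction_on with
  | empty => exact fun _ => ⟨topSep, top_mem ω, fun v hv => absurd hv (by simp)⟩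
  | @insert a s ha ih =>
    intro h
    obtain ⟨w, hw, hwav⟩ := ih fun v hv => h v (Finset.mem_insert_of_mem hv)
    obtain ⟨t, ht, hta⟩ := h a (Finset.mem_insert_self _ _)
    refine ⟨meetSep t w, meet_mem ω ht hw, fun v hv hmem => ?_⟩
    rcases Finset.mem_insert.mp hv with rfl | hv
    · exact hta hmem.1
    · exact hwav v hv hmem.2

lemma exists_avoid (ω : GraphEnd G) {F : Set V} (hF : F.Finite)
    (h : ∀ v ∈ F, ∃ t ∈ endTangle ω, v ∉ t.1.B) :
    ∃ w ∈ endTangle ω, ∀ v ∈ F, v ∉ w.1.B := by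
  obtain ⟨w, hw, hav⟩ := exists_avoid' ω hF.toFinset
    (fun v hv => h v (hF.mem_toFinset.mp hv))
  exact ⟨w, hw, fun v hv => hav v (hF.mem_toFinset.mpr hv)⟩

lemma memB_of_notMemA (s : Separation G) {x : V} (h : x ∉ s.A) : x ∈ s.B := by
  have hx : x ∈ s.A ∪ s.B := by rw [s.union_eq]; trivial
  rcases hx with h' | h'
  · exact absurd h' h
  · exact h'

/-- Core construction: if every vertex outside `s₀.B` can be put strictly on the
small side of some tangle separation, then the tangle realizes every finite
trace of `s₀`. -/
lemma approx (ω : GraphEnd G) (s₀ : FinSep G)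
    (hK : ∀ v, v ∉ s₀.1.B → ∃ t ∈ endTangle ω, v ∉ t.1.B)
    {Z : Set V} (hZ : Z.Finite) :
    ∃ t ∈ endTangle ω, t.1.A ∩ Z = s₀.1.A ∩ Z ∧ t.1.B ∩ Z = s₀.1.B ∩ Z := by
  obtain ⟨w, hw, hwav⟩ := exists_avoid ω (hZ.inter_of_left (s₀.1.A \ s₀.1.B))
    (fun v hv => hK v hv.2.2)
  refine ⟨⟨⟨(w.1.A ∩ s₀.1.A) ∪ (Z ∩ s₀.1.A ∩ s₀.1.B), w.1.B ∪ s₀.1.B, ?_, ?_⟩, ?_⟩,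
    ?_, ?_, ?_⟩
  · -- union covers
    apply Set.eq_univ_of_forall
    intro x
    by_cases hxw : x ∈ w.1.B
    · exact Or.inr (Or.inl hxw)
    · by_cases hxs : x ∈ s₀.1.B
      · exact Or.inr (Or.inr hxs)
      · exact Or.inl (Or.inl ⟨memA_of_notMemB w.1 hxw, memA_of_notMemB s₀.1 hxs⟩)
  · -- no edge across
    intro a ha b hb hadj
    have haw : a ∉ w.1.B := fun h => ha.2 (Or.inl h)
    have has : a ∉ s₀.1.B := fun h => ha.2 (Or.inr h)
    have haA : a ∈ w.1.A ∩ s₀.1.A := by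
      rcases ha.1 with h | h
      · exact h
      · exact absurd h.2 has
    by_cases hbw : b ∈ w.1.A
    · have hbs : b ∉ s₀.1.A := fun h => hb.2 (Or.inl ⟨hbw, h⟩)
      exact s₀.1.no_edge a ⟨haA.2, has⟩ b ⟨memB_of_notMemA s₀.1 hbs, hbs⟩ hadj
    · exact w.1.no_edge a ⟨haA.1, haw⟩ b ⟨memB_of_notMemA w.1 hbw, hbw⟩ hadj
  · -- finite order
    refine (w.2.union s₀.2).subset ?_
    rintro x ⟨hA, hB⟩
    rcases hA with h | h
    · rcases hB with h' | h'
      · exact Or.inl ⟨h.1, h'⟩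
      · exact Or.inr ⟨h.2, h'⟩
    · exact Or.inr ⟨h.1.2, h.2⟩
  · -- in the tangle
    exact tau_mono ω hw (fun x hx => Or.inl hx)
  · -- A-trace
    ext x
    constructor
    · rintro ⟨hA, hZx⟩
      rcases hA with h | h
      · exact ⟨h.2, hZx⟩
      · exact ⟨h.1.2, hZx⟩
    · rintro ⟨hA₀, hZx⟩
      by_cases hB₀ : x ∈ s₀.1.B
      · exact ⟨Or.inr ⟨⟨hZx, hA₀⟩, hB₀⟩, hZx⟩
      · have hxw : x ∉ w.1.B := hwav x ⟨hZx, hA₀, hB₀⟩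
        exact ⟨Or.inl ⟨memA_of_notMemB w.1 hxw, hA₀⟩, hZx⟩
  · -- B-trace
    ext x
    constructor
    · rintro ⟨hB, hZx⟩
      rcases hB with h | h
      · by_contra hc
        have hB₀ : x ∉ s₀.1.B := fun h' => hc ⟨h', hZx⟩
        exact hwav x ⟨hZx, memA_of_notMemB s₀.1 hB₀, hB₀⟩ h
      · exact ⟨h, hZx⟩
    · rintro ⟨hB₀, hZx⟩
      exact ⟨Or.inr hB₀, hZx⟩

/-- Basic open sets given by traces on finite sets form a neighbourhood basis. -/
lemma basis_lemma (s₀ : FinSep G) {o : Set (FinSep G)}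
    (ho : TopologicalSpace.GenerateOpen
      {O | ∃ Z AZ BZ : Set V, Z.Finite ∧
        O = {s : FinSep G | s.1.A ∩ Z = AZ ∧ s.1.B ∩ Z = BZ}} o) :
    s₀ ∈ o → ∃ Z : Set V, Z.Finite ∧
      {t : FinSep G | t.1.A ∩ Z = s₀.1.A ∩ Z ∧ t.1.B ∩ Z = s₀.1.B ∩ Z} ⊆ o := by
  induction ho with
  | basic u hu =>
    intro hs
    obtain ⟨Z, AZ, BZ, hZ, rfl⟩ := hu
    obtain ⟨h1, h2⟩ := hs
    exact ⟨Z, hZ, fun t ht => ⟨by rw [ht.1, h1], by rw [ht.2, h2]⟩⟩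
  | univ => exact fun _ => ⟨∅, Set.finite_empty, fun t _ => trivial⟩
  | inter u v hu hv ihu ihv =>
    intro hs
    obtain ⟨Z1, hZ1, hsub1⟩ := ihu hs.1
    obtain ⟨Z2, hZ2, hsub2⟩ := ihv hs.2
    have key : ∀ (X Y : Set V), (X ∩ (Z1 ∪ Z2) = Y ∩ (Z1 ∪ Z2)) →
        X ∩ Z1 = Y ∩ Z1 ∧ X ∩ Z2 = Y ∩ Z2 := by
      intro X Y h
      constructor
      · calc X ∩ Z1 = (X ∩ (Z1 ∪ Z2)) ∩ Z1 := by
              rw [Set.inter_assoc, Set.union_inter_cancel_left]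
          _ = (Y ∩ (Z1 ∪ Z2)) ∩ Z1 := by rw [h]
          _ = Y ∩ Z1 := by rw [Set.inter_assoc, Set.union_inter_cancel_left]
      · calc X ∩ Z2 = (X ∩ (Z1 ∪ Z2)) ∩ Z2 := by
              rw [Set.inter_assoc, Set.union_inter_cancel_right]
          _ = (Y ∩ (Z1 ∪ Z2)) ∩ Z2 := by rw [h]
          _ = Y ∩ Z2 := by rw [Set.inter_assoc, Set.union_inter_cancel_right]
    refine ⟨Z1 ∪ Z2, hZ1.union hZ2, fun t ht => ⟨hsub1 ?_, hsub2 ?_⟩⟩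
    · exact ⟨(key _ _ ht.1).1, (key _ _ ht.2).1⟩
    · exact ⟨(key _ _ ht.1).2, (key _ _ ht.2).2⟩
  | sUnion S hS ih =>
    intro hs
    obtain ⟨u, huS, hsu⟩ := hs
    obtain ⟨Z, hZ, hsub⟩ := ih u huS hsu
    exact ⟨Z, hZ, hsub.trans (Set.subset_sUnion_of_mem huS)⟩

end Aux

/-- for an end tangle, being closed, having an absolute decider,
and having an `ℵ₀`-block as absolute decider are equivalent. -/
theorem closed_iff_absolute_decider {V : Type u} (G : SimpleGraph V) (ω : GraphEnd G) :
    (IsClosed (endTangle ω) ↔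
      ∃ K : Set V, endTangle ω = {s : FinSep G | K ⊆ s.1.B}) ∧
    ((∃ K : Set V, endTangle ω = {s : FinSep G | K ⊆ s.1.B}) ↔
      ∃ K : Set V, Aleph0Block G K ∧ endTangle ω = {s : FinSep G | K ⊆ s.1.B}) := by
  constructor
  · constructor
    · -- closed → decider
      intro hclosed
      refine ⟨{v | ∀ t ∈ endTangle ω, v ∈ t.1.B}, ?_⟩
      apply Set.Subset.antisymm
      · exact fun s hs v hv => hv s hs
      · intro s hs
        have hcl : s ∈ closure (endTangle ω) := by
          rw [mem_closure_iff]
          intro o ho hso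
          have ho' : TopologicalSpace.GenerateOpen
              {O | ∃ Z AZ BZ : Set V, Z.Finite ∧
                O = {t : FinSep G | t.1.A ∩ Z = AZ ∧ t.1.B ∩ Z = BZ}} o := ho
          obtain ⟨Z, hZfin, hZsub⟩ := basis_lemma s ho' hso
          have hKs : ∀ v, v ∉ s.1.B → ∃ t ∈ endTangle ω, v ∉ t.1.B := by
            intro v hv
            by_contra hc
            push_neg at hc
            exact hv (hs hc)
          obtain ⟨t, ht, hA, hB⟩ := approx ω s hKs hZfin
          exact ⟨t, hZsub ⟨hA, hB⟩, ht⟩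
        rwa [hclosed.closure_eq] at hcl
    · -- decider → closed
      rintro ⟨K, hK⟩
      rw [← isOpen_compl_iff, hK]
      have hcompl : {s : FinSep G | K ⊆ s.1.B}ᶜ =
          ⋃ v ∈ K, {s : FinSep G | v ∉ s.1.B} := by
        ext s
        simp only [Set.mem_compl_iff, Set.mem_setOf_eq, Set.mem_iUnion, Set.not_subset]
        constructor
        · rintro ⟨v, hv, hv'⟩; exact ⟨v, hv, hv'⟩
        · rintro ⟨v, hv, hv'⟩; exact ⟨v, hv, hv'⟩
      rw [hcompl]
      apply isOpen_biUnion
      intro v _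
      have heq : {s : FinSep G | v ∉ s.1.B} =
          {s : FinSep G | s.1.A ∩ {v} = {v} ∧ s.1.B ∩ {v} = (∅ : Set V)} := by
        ext t
        simp only [Set.mem_setOf_eq]
        constructor
        · intro h
          refine ⟨?_, ?_⟩
          · apply Set.Subset.antisymm (Set.inter_subset_right)
            intro x hx
            rcases hx with rfl
            exact ⟨memA_of_notMemB t.1 h, rfl⟩
          · apply Set.eq_empty_iff_forall_notMem.mpr
            rintro x ⟨hxB, rfl⟩
            exact h hxB
        · rintro ⟨_, h2⟩ hvB
          exact Set.eq_empty_iff_forall_notMem.mp h2 v ⟨hvB, rfl⟩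
      rw [heq]
      exact TopologicalSpace.GenerateOpen.basic _
        ⟨{v}, {v}, ∅, Set.finite_singleton v, rfl⟩
  · constructor
    · -- decider → ℵ₀-block decider
      rintro ⟨K₀, hK₀⟩
      set K : Set V := {v | ∀ t ∈ endTangle ω, v ∈ t.1.B} with hKdef
      have hK₀K : K₀ ⊆ K := by
        intro v hv t ht
        rw [hK₀] at ht
        exact ht hv
      have hdec : endTangle ω = {s : FinSep G | K ⊆ s.1.B} := by
        apply Set.Subset.antisymm
        · exact fun s hs v hv => hv s hs
        · intro s hs
          rw [hK₀]
          exact hK₀K.trans hs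
      have hInf : K.Infinite := by
        by_contra hfin
        rw [Set.not_infinite] at hfin
        set sK : FinSep G := ⟨⟨Set.univ, K, by simp,
          fun a _ b hb => absurd (Set.mem_univ b) hb.2⟩, by simpa using hfin⟩ with hsK
        have hsmem : sK ∈ endTangle ω := by
          rw [hdec]
          exact fun v hv => hv
        obtain ⟨R, hR⟩ := ω.nonempty
        obtain ⟨N, hN⟩ := hsmem R hR
        have : K.Infinite := Set.infinite_of_injective_forall_mem
          (f := fun n : ℕ => R.f (N + n))
          (fun a b h => by have := R.inj h; omega)
          (fun n => hN (N + n) (Nat.le_add_right N n))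
        exact hfin.not_infinite this
      have hins : FinInseparable G K := by
        intro s x hx y hy hsep
        rcases orient ω s with h | h
        · exact hsep.1.2 (hx s h)
        · exact hsep.2.2 (hy s.rev h)
      refine ⟨K, ⟨hInf, hins, ?_⟩, hdec⟩
      intro K' hKK' _ hK'ins
      refine Set.Subset.antisymm ?_ hKK'
      intro v hv t ht
      by_contra hvB
      have hvA : v ∈ t.1.A := memA_of_notMemB t.1 hvB
      obtain ⟨y, hyK, hyT⟩ := (hInf.diff t.2).nonempty
      have hyB : y ∈ t.1.B := hyK t ht
      have hyA : y ∉ t.1.A := fun h => hyT ⟨h, hyB⟩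
      exact hK'ins t v (hv) y (hKK' hyK) ⟨⟨hvA, hvB⟩, ⟨hyB, hyA⟩⟩
    · -- trivial direction
      rintro ⟨K, _, hK⟩
      exact ⟨K, hK⟩
end

section
/- Let τ = τ_ω be the end tangle of an end ω of G and k ∈ ℕ with deg(ω) + dom(ω) ≥ k. Then τ ∩ S⃗_k has a relative decider X of size exactly k: a set X ⊆ V with |X| = k such that |A∩X| < |B∩X| for every (A,B) ∈ τ with |A∩B| < k. -/
open Set

universe u

/-!
Take `m` disjoint rays `R l` of `ω` avoiding a set `D` of `n` dominating vertices, and cut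
each ray at a vertex `x l = R l (Q l)`; the decider is `X = D ∪ {x l}`. A separation
`(A, B) ∈ τ_ω` of order `< k` has every dominating vertex in `B`. The cut-offs `Q l` are chosen
above all vertices that fans (`k` paths from a dominating vertex to a ray, disjoint apart from
it) and bars (`k` disjoint finite walks meeting every ray) have on `R l`; then no initial segment
`R l [0, Q l]` can lie in `A \ B`, for otherwise one fan, or the bars, or the rays together with
`D` would produce `k` vertices of `A ∩ B`. Hence every `x l ∈ A \ B` has a vertex of `A ∩ B` on
`R l` both below and above it, so `2 |X ∩ (A \ B)| + |X ∩ A ∩ B| ≤ |A ∩ B| < |X|`, which is the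
inequality `|A ∩ X| < |B ∩ X|`.
-/

open SimpleGraph Function

lemma natCard_le_ncard_of_pairwise_disjoint {ι β : Type*} {S : Set β} (hS : S.Finite)
    (P : ι → Set β) (hP : ∀ i, (P i ∩ S).Nonempty) (hd : Pairwise (Disjoint on P)) :
    Nat.card ι ≤ S.ncard := by
  choose z hzP hzS using hP
  have := hS.to_subtype
  have hinj : Injective fun i => (⟨z i, hzS i⟩ : S) := fun i j hij => by
    by_contra hne
    have hz : z i = z j := congrArg Subtype.val hij
    exact Set.disjoint_left.mp (hd hne) (hzP i) (hz ▸ hzP j)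
  simpa using Nat.card_le_card_of_injective _ hinj

lemma exists_fin_pairwise_disjoint {α β : Type*} (P : α → Set β) (hfin : ∀ a, (P a).Finite)
    (h : ∀ F : Set β, F.Finite → ∃ a, Disjoint (P a) F) (k : ℕ) :
    ∃ f : Fin k → α, Pairwise (Disjoint on fun i => P (f i)) := by
  induction k with
  | zero => exact ⟨Fin.elim0, fun i => Fin.elim0 i⟩
  | succ k ih =>
    obtain ⟨f, hf⟩ := ih
    obtain ⟨a, ha⟩ := h (⋃ i, P (f i)) (finite_iUnion fun i => hfin (f i))
    refine ⟨Fin.cons a f, fun i j hij => ?_⟩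
    induction i using Fin.cases <;> induction j using Fin.cases
    · exact absurd rfl hij
    · exact ha.mono_right (subset_iUnion (fun i => P (f i)) _)
    · exact (ha.mono_right (subset_iUnion (fun i => P (f i)) _)).symm
    · exact hf (ne_of_apply_ne Fin.succ hij)

section
variable {V : Type u} {G : SimpleGraph V}

namespace Separation
variable (s : Separation G)

lemma mem_or_mem (v : V) : v ∈ s.A ∨ v ∈ s.B :=
  (s.union_eq ▸ mem_univ v : v ∈ s.A ∪ s.B)

lemma mem_B_of_notMem_sdiff {v : V} (h : v ∉ s.A \ s.B) : v ∈ s.B :=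
  (s.mem_or_mem v).elim (fun hA => by_contra fun hB => h ⟨hA, hB⟩) id

lemma mem_inter_of_adj {a b : V} (ha : a ∈ s.A \ s.B) (hb : b ∉ s.A \ s.B) (hab : G.Adj a b) :
    b ∈ s.A ∩ s.B :=
  ⟨by_contra fun hbA => s.no_edge a ha b ⟨s.mem_B_of_notMem_sdiff hb, hbA⟩ hab,
    s.mem_B_of_notMem_sdiff hb⟩

lemma exists_mem_inter_of_walk {u v : V} (w : G.Walk u v) (hu : u ∈ s.A \ s.B)
    (hv : v ∉ s.A \ s.B) : ∃ z ∈ w.support, z ∈ s.A ∩ s.B := by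
  obtain ⟨d, hd, hd₁, hd₂⟩ := w.exists_boundary_dart _ hu hv
  exact ⟨_, w.dart_snd_mem_support_of_mem_darts hd, s.mem_inter_of_adj hd₁ hd₂ d.adj⟩

lemma exists_mem_inter_of_mem_support {u v x y : V} (w : G.Walk u v) (hx : x ∈ w.support)
    (hxA : x ∈ s.A \ s.B) (hy : y ∈ w.support) (hyA : y ∉ s.A \ s.B) :
    ∃ z ∈ w.support, z ∈ s.A ∩ s.B := by
  classical
  by_cases hu : u ∈ s.A \ s.B
  · obtain ⟨z, hz, hzS⟩ := s.exists_mem_inter_of_walk (w.takeUntil y hy) hu hyA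
    exact ⟨z, w.support_takeUntil_subset_support hy hz, hzS⟩
  · obtain ⟨z, hz, hzS⟩ := s.exists_mem_inter_of_walk (w.takeUntil x hx).reverse hxA hu
    exact ⟨z, w.support_takeUntil_subset_support hx (by simpa using hz), hzS⟩

lemma ncard_inter_lt_ncard_inter {X : Set V} (hX : X.Finite)
    (h : 2 * (X ∩ (s.A \ s.B)).ncard + (X ∩ (s.A ∩ s.B)).ncard < X.ncard) :
    (s.A ∩ X).ncard < (s.B ∩ X).ncard := by
  have hA : s.A ∩ X = X ∩ (s.A \ s.B) ∪ X ∩ (s.A ∩ s.B) := by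
    ext v
    simp only [mem_inter_iff, mem_union, mem_sdiff]
    tauto
  have hB : s.B ∩ X = X \ (s.A \ s.B) := by
    ext v
    have := s.mem_or_mem v
    simp only [mem_inter_iff, mem_sdiff]
    tauto
  have hdisj : Disjoint (X ∩ (s.A \ s.B)) (X ∩ (s.A ∩ s.B)) :=
    Set.disjoint_left.mpr fun v hv hv' => hv.2.2 hv'.2.2
  rw [hA, ncard_union_eq hdisj (hX.subset inter_subset_left) (hX.subset inter_subset_left), hB]
  have := ncard_inter_add_ncard_sdiff_eq_ncard X (s.A \ s.B) hX
  omega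

lemma natCard_le_of_fan (hS : (s.A ∩ s.B).Finite) {v : V} (hv : v ∉ s.A) {ι : Type*}
    {e : ι → V} (w : ∀ i, G.Walk v (e i)) (he : ∀ i, e i ∈ s.A \ s.B)
    (hd : Pairwise (Disjoint on fun i => {x | x ∈ (w i).support} \ {v})) :
    Nat.card ι ≤ (s.A ∩ s.B).ncard :=
  natCard_le_ncard_of_pairwise_disjoint hS _ (fun i => by
    obtain ⟨z, hz, hzS⟩ := s.exists_mem_inter_of_walk (w i).reverse (he i) fun h => hv h.1
    exact ⟨z, ⟨by simpa using hz, fun hzv : z = v => hv (hzv ▸ hzS.1)⟩, hzS⟩) hd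

lemma natCard_le_of_crossing_walks (hS : (s.A ∩ s.B).Finite) {ι : Type*}
    (b : ι → (u : V) × (v : V) × G.Walk u v)
    (hin : ∀ i, ∃ x ∈ (b i).2.2.support, x ∈ s.A \ s.B)
    (hout : ∀ i, ∃ y ∈ (b i).2.2.support, y ∉ s.A \ s.B)
    (hd : Pairwise (Disjoint on fun i => {x | x ∈ (b i).2.2.support})) :
    Nat.card ι ≤ (s.A ∩ s.B).ncard :=
  natCard_le_ncard_of_pairwise_disjoint hS _ (fun i => by
    obtain ⟨x, hx, hxA⟩ := hin i
    obtain ⟨y, hy, hyA⟩ := hout i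
    exact s.exists_mem_inter_of_mem_support _ hx hxA hy hyA) hd

lemma card_add_le_of_rays (hS : (s.A ∩ s.B).Finite) {D : Finset V}
    (hDS : ∀ d ∈ D, d ∈ s.A ∩ s.B) {m : ℕ} {R : Fin m → GraphRay G}
    (hdisj : Pairwise (Disjoint on fun l => range (R l).f))
    (hRD : ∀ l t, (R l).f t ∉ D) (hRS : ∀ l, ∃ t, (R l).f t ∈ s.A ∩ s.B) :
    D.card + m ≤ (s.A ∩ s.B).ncard := by
  have := natCard_le_ncard_of_pairwise_disjoint hS
    (Sum.elim (fun d : D => {d.1}) fun l => range (R l).f) ?_ ?_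
  · simpa using this
  · rintro (d | l)
    · exact ⟨d, rfl, hDS d d.2⟩
    · obtain ⟨t, ht⟩ := hRS l
      exact ⟨_, ⟨t, rfl⟩, ht⟩
  · rintro (d | l) (d' | l') hne
    · exact disjoint_singleton.mpr fun h => hne (congrArg _ (Subtype.ext h))
    · exact disjoint_singleton_left.mpr fun ⟨t, ht⟩ => hRD l' t (ht ▸ d.2)
    · exact disjoint_singleton_right.mpr fun ⟨t, ht⟩ => hRD l t (ht ▸ d'.2)
    · exact hdisj fun h => hne (congrArg _ h)

end Separation

namespace GraphRay

def shift (R : GraphRay G) (N : ℕ) : GraphRay G where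
  f n := R.f (n + N)
  inj a b hab := by simpa using R.inj hab
  adj n := by simpa [add_right_comm] using R.adj (n + N)

lemma exists_forall_ge_notMem (R : GraphRay G) {F : Set V} (hF : F.Finite) :
    ∃ N, ∀ t ≥ N, R.f t ∉ F := by
  obtain ⟨b, hb⟩ := (hF.preimage R.inj.injOn).bddAbove
  exact ⟨b + 1, fun t ht hmem => by have := hb hmem; omega⟩

lemma exists_walk_of_le (R : GraphRay G) {a b : ℕ} (hab : a ≤ b) :
    ∃ w : G.Walk (R.f a) (R.f b), ∀ x ∈ w.support, x ∈ R.f '' Icc a b := by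
  induction b, hab using Nat.le_induction with
  | base => exact ⟨.nil, by simp⟩
  | succ b hab ih =>
    obtain ⟨w, hw⟩ := ih
    refine ⟨w.concat (R.adj b), fun x hx => ?_⟩
    rw [Walk.support_concat, List.mem_append, List.mem_singleton] at hx
    rcases hx with hx | rfl
    · exact image_mono (Icc_subset_Icc_right b.le_succ) (hw x hx)
    · exact ⟨b + 1, ⟨by omega, le_rfl⟩, rfl⟩

lemma exists_walk (R : GraphRay G) (a b : ℕ) :
    ∃ w : G.Walk (R.f a) (R.f b), ∀ x ∈ w.support, x ∈ R.f '' uIcc a b := by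
  rcases le_total a b with hab | hba
  · obtain ⟨w, hw⟩ := R.exists_walk_of_le hab
    exact ⟨w, by simpa [uIcc_of_le hab] using hw⟩
  · obtain ⟨w, hw⟩ := R.exists_walk_of_le hba
    exact ⟨w.reverse, by simpa [uIcc_of_ge hba] using hw⟩

end GraphRay

lemma Separation.exists_ray_mem_inter (s : Separation G) (R : GraphRay G) {a b : ℕ}
    (ha : R.f a ∈ s.A \ s.B) (hb : R.f b ∉ s.A \ s.B) :
    ∃ t ∈ uIcc a b, t ≠ a ∧ R.f t ∈ s.A ∩ s.B := by
  obtain ⟨w, hw⟩ := R.exists_walk a b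
  obtain ⟨z, hz, hzS⟩ := s.exists_mem_inter_of_walk w ha hb
  obtain ⟨t, ht, rfl⟩ := hw z hz
  exact ⟨t, ht, fun hta => ha.2 (hta ▸ hzS.2), hzS⟩

lemma HasTailIn.exists_gt_mem_inter {s : Separation G} {R : GraphRay G} (hR : HasTailIn R s.B)
    {a : ℕ} (ha : R.f a ∈ s.A \ s.B) : ∃ t > a, R.f t ∈ s.A ∩ s.B := by
  obtain ⟨N, hN⟩ := hR
  obtain ⟨t, ht, hta, htS⟩ :=
    s.exists_ray_mem_inter R ha (b := N + a) fun h => h.2 (hN _ (by omega))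
  rw [mem_uIcc] at ht
  exact ⟨t, by omega, htS⟩

namespace GraphEnd
variable (ω : GraphEnd G)

lemma shift_mem {R : GraphRay G} (hR : R ∈ ω.rays) (N : ℕ) : R.shift N ∈ ω.rays := by
  refine (ω.mem_iff R hR _).mpr fun F hF => ?_
  obtain ⟨M, hM⟩ := R.exists_forall_ge_notMem hF
  exact ⟨M + N, M, .nil, by simpa [GraphRay.shift] using hM _ (by omega)⟩

lemma exists_walk_avoiding_of_ge {R R' : GraphRay G} (hR : R ∈ ω.rays) (hR' : R' ∈ ω.rays)
    {F : Set V} (hF : F.Finite) (N : ℕ) :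
    ∃ a ≥ N, ∃ (q : ℕ) (w : G.Walk (R.f a) (R'.f q)), ∀ x ∈ w.support, x ∉ F := by
  obtain ⟨a, q, w, hw⟩ := (ω.mem_iff _ (ω.shift_mem hR N) R').mp hR' F hF
  exact ⟨a + N, by omega, q, w, hw⟩

lemma exists_walk_visiting {R₀ : GraphRay G} (hR₀ : R₀ ∈ ω.rays) {F : Set V} (hF : F.Finite)
    (Rs : List (GraphRay G)) (hRs : ∀ R ∈ Rs, R ∈ ω.rays) (N : ℕ) :
    ∃ (st : ℕ) (u : V) (w : G.Walk (R₀.f st) u), N ≤ st ∧ (∀ x ∈ w.support, x ∉ F) ∧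
      ∀ R ∈ Rs, ∃ x ∈ w.support, x ∈ range R.f := by
  obtain ⟨M, hM⟩ := R₀.exists_forall_ge_notMem hF
  induction Rs generalizing N with
  | nil =>
    refine ⟨max N M, _, .nil, le_max_left _ _, fun x hx => ?_, by simp⟩
    rw [Walk.support_nil, List.mem_singleton] at hx
    exact hx ▸ hM _ (le_max_right _ _)
  | cons R Rs ih =>
    obtain ⟨st, u, w₁, hst, hw₁F, hw₁R⟩ := ih (fun R' hR' => hRs R' (by simp [hR'])) (max N M)
    obtain ⟨a, ha, q, w₂, hw₂⟩ := ω.exists_walk_avoiding_of_ge hR₀ (hRs R (by simp)) hF (max N M)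
    obtain ⟨w₃, hw₃⟩ := R₀.exists_walk a st
    -- out to `R` along `w₂` and back, then along `R₀` to the start of `w₁`
    refine ⟨a, u, (w₂.append w₂.reverse).append (w₃.append w₁), by omega,
      fun x hx => ?_, ?_⟩
    · simp only [Walk.mem_support_append_iff, Walk.support_reverse, List.mem_reverse] at hx
      rcases hx with (hx | hx) | hx | hx
      · exact hw₂ x hx
      · exact hw₂ x hx
      · obtain ⟨t, ht, rfl⟩ := hw₃ x hx
        rw [mem_uIcc] at ht
        exact hM t (by omega)
      · exact hw₁F x hx
    · simp only [List.mem_cons, forall_eq_or_imp]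
      refine ⟨⟨R.f q, by simp, q, rfl⟩, fun R' hR' => ?_⟩
      obtain ⟨x, hx, hxR⟩ := hw₁R R' hR'
      exact ⟨x, by simp [hx], hxR⟩

lemma exists_bars {m : ℕ} {R : Fin m → GraphRay G} (hR : ∀ l, R l ∈ ω.rays) (k : ℕ) :
    ∃ b : Fin k → (u : V) × (v : V) × G.Walk u v,
      (∀ i l, ∃ x ∈ (b i).2.2.support, x ∈ range (R l).f) ∧
      Pairwise (Disjoint on fun i => {x | x ∈ (b i).2.2.support}) := by
  obtain ⟨R₀, hR₀⟩ := ω.nonempty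
  obtain ⟨f, hf⟩ := exists_fin_pairwise_disjoint
    (α := {b : (u : V) × (v : V) × G.Walk u v // ∀ l, ∃ x ∈ b.2.2.support, x ∈ range (R l).f})
    (fun b => {x | x ∈ b.1.2.2.support}) (fun b => b.1.2.2.support.finite_toSet) (fun F hF => by
      obtain ⟨st, u, w, -, hwF, hwR⟩ :=
        ω.exists_walk_visiting hR₀ hF (List.ofFn R) (by simpa [List.mem_ofFn] using hR) 0
      exact ⟨⟨⟨_, u, w⟩, fun l => hwR (R l) (List.mem_ofFn.mpr ⟨l, rfl⟩)⟩,
        Set.disjoint_left.mpr fun x hx hxF => hwF x hx hxF⟩) k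
  exact ⟨fun i => (f i).1, fun i => (f i).2, hf⟩

end GraphEnd

lemma DegGE.exists_rays_avoiding {ω : GraphEnd G} {m : ℕ} (h : DegGE G ω m) {F : Set V}
    (hF : F.Finite) :
    ∃ R : Fin m → GraphRay G, (∀ l, R l ∈ ω.rays) ∧
      Pairwise (Disjoint on fun l => range (R l).f) ∧ ∀ l t, (R l).f t ∉ F := by
  obtain ⟨R, hR, hdisj⟩ := h
  choose N hN using fun l => (R l).exists_forall_ge_notMem hF
  have hsub : ∀ l, range ((R l).shift (N l)).f ⊆ range (R l).f := by
    rintro l _ ⟨t, rfl⟩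
    exact ⟨_, rfl⟩
  exact ⟨fun l => (R l).shift (N l), fun l => ω.shift_mem (hR l) _,
    fun i j hij => (hdisj i j hij).mono (hsub i) (hsub j), fun l t => hN l _ (by omega)⟩

namespace Dominates
variable {ω : GraphEnd G} {v : V}

lemma exists_walk_avoiding (hv : Dominates G v ω) {R' : GraphRay G} (hR' : R' ∈ ω.rays)
    {F : Set V} (hF : F.Finite) (hvF : v ∉ F) :
    ∃ (g : ℕ) (w : G.Walk v (R'.f g)), ∀ x ∈ w.support, x ∉ F := by
  obtain ⟨R, hR, p, -, hinj, hmeet⟩ := hv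
  obtain ⟨N, hN⟩ := R.exists_forall_ge_notMem hF
  -- a vertex of `F` is not `v`, so it lies on at most one of the paths `p i`
  have hhit : {i | ∃ x ∈ (p i).2.support, x ∈ F}.Finite := by
    refine (hF.biUnion fun x hx =>
      Subsingleton.finite (s := {i | x ∈ (p i).2.support}) ?_).subset ?_
    · intro i hi j hj
      by_contra hij
      exact hvF (hmeet i j hij x hi hj ▸ hx)
    · rintro i ⟨x, hx, hxF⟩
      exact mem_biUnion hxF hx
  have hlow : {i | (p i).1 < N}.Finite := (finite_Iio N).preimage hinj.injOn
  obtain ⟨i, hi⟩ := (hhit.union hlow).infinite_compl.nonempty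
  simp only [mem_compl_iff, mem_union, mem_ofPred_eq, not_or, not_exists, not_and, not_lt] at hi
  obtain ⟨a, ha, q, w₂, hw₂⟩ := ω.exists_walk_avoiding_of_ge hR hR' hF N
  obtain ⟨w₁, hw₁⟩ := R.exists_walk (p i).1 a
  refine ⟨q, (p i).2.append (w₁.append w₂), fun x hx => ?_⟩
  simp only [Walk.mem_support_append_iff] at hx
  rcases hx with hx | hx | hx
  · exact hi.1 x hx
  · obtain ⟨t, ht, rfl⟩ := hw₁ x hx
    rw [mem_uIcc] at ht
    exact hN t (by omega)
  · exact hw₂ x hx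

lemma mem_B (hv : Dominates G v ω) {s : FinSep G} (hs : s ∈ endTangle ω) : v ∈ s.1.B := by
  by_contra hvB
  obtain ⟨R, hR⟩ := ω.nonempty
  obtain ⟨N, hN⟩ := hs R hR
  obtain ⟨g, w, hw⟩ := hv.exists_walk_avoiding (ω.shift_mem hR N) s.2 fun h => hvB h.2
  obtain ⟨z, hz, hzS⟩ := s.1.exists_mem_inter_of_walk w
    ⟨(s.1.mem_or_mem v).resolve_right hvB, hvB⟩ fun h => h.2 (hN _ (by simp))
  exact hw z hz hzS

lemma exists_fan (hv : Dominates G v ω) {R : GraphRay G} (hR : R ∈ ω.rays) (k : ℕ) :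
    ∃ f : Fin k → (g : ℕ) × G.Walk v (R.f g),
      Pairwise (Disjoint on fun i => {x | x ∈ (f i).2.support} \ {v}) :=
  exists_fin_pairwise_disjoint (α := (g : ℕ) × G.Walk v (R.f g))
    (fun a => {x | x ∈ a.2.support} \ {v}) (fun a => a.2.support.finite_toSet.sdiff) (fun F hF => by
      obtain ⟨g, w, hw⟩ := hv.exists_walk_avoiding hR (hF.sdiff (t := {v})) (by simp)
      exact ⟨⟨g, w⟩, Set.disjoint_left.mpr fun x hx hxF => hw x hx.1 ⟨hxF, hx.2⟩⟩) k

end Dominates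

section Cut
variable {D : Finset V} {m : ℕ} {R : Fin m → GraphRay G}

def cutSet (D : Finset V) (R : Fin m → GraphRay G) (Q : Fin m → ℕ) : Set V :=
  ↑D ∪ range fun l => (R l).f (Q l)

lemma injective_cut (hdisj : Pairwise (Disjoint on fun l => range (R l).f)) (Q : Fin m → ℕ) :
    Injective fun l => (R l).f (Q l) := fun l l' h => by
  by_contra hne
  exact Set.disjoint_left.mp (hdisj hne) ⟨_, rfl⟩ ⟨_, h.symm⟩

lemma ncard_cutSet (hdisj : Pairwise (Disjoint on fun l => range (R l).f))
    (hRD : ∀ l t, (R l).f t ∉ D) (Q : Fin m → ℕ) : (cutSet D R Q).ncard = D.card + m := by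
  rw [cutSet, ncard_union_eq, ncard_coe_finset, ncard_range_of_injective (injective_cut hdisj Q),
    Nat.card_eq_fintype_card, Fintype.card_fin]
  exact Set.disjoint_right.mpr fun _ ⟨l, hl⟩ hD => hRD l (Q l) (by rwa [← hl] at hD)

lemma ray_notMem_cutSet (hdisj : Pairwise (Disjoint on fun l => range (R l).f))
    (hRD : ∀ l t, (R l).f t ∉ D) {Q : Fin m → ℕ} {l : Fin m} {t : ℕ} (ht : t ≠ Q l) :
    (R l).f t ∉ cutSet D R Q := by
  rintro (hD | ⟨l', hl'⟩)
  · exact hRD l t hD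
  · by_cases hll : l' = l
    · subst hll
      exact ht ((R l').inj hl').symm
    · exact Set.disjoint_left.mp (hdisj hll) ⟨_, rfl⟩ ⟨t, hl'.symm⟩

lemma disjoint_image_rays (hdisj : Pairwise (Disjoint on fun l => range (R l).f))
    {l l' : Fin m} {T T' : Set ℕ} (h : l = l' → Disjoint T T') :
    Disjoint ((R l).f '' T) ((R l').f '' T') := by
  by_cases hll : l = l'
  · subst hll
    exact (disjoint_image_iff (R l).inj).mpr (h rfl)
  · exact (hdisj hll).mono (image_subset_range _ _) (image_subset_range _ _)

variable (s : Separation G)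

/-- A cut vertex in `A \ B` has a vertex of `A ∩ B` on its ray on either side of it. -/
lemma Separation.two_mul_ncard_le_ncard_sdiff_cutSet (hS : (s.A ∩ s.B).Finite)
    (hdisj : Pairwise (Disjoint on fun l => range (R l).f)) (hRD : ∀ l t, (R l).f t ∉ D)
    {Q : Fin m → ℕ} (htail : ∀ l, HasTailIn (R l) s.B)
    (hQ : ∀ l, ∃ g ≤ Q l, (R l).f g ∉ s.A \ s.B) :
    2 * {l | (R l).f (Q l) ∈ s.A \ s.B}.ncard ≤ ((s.A ∩ s.B) \ cutSet D R Q).ncard := by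
  set J : Set (Fin m) := {l | (R l).f (Q l) ∈ s.A \ s.B}
  have := natCard_le_ncard_of_pairwise_disjoint (hS.sdiff (t := cutSet D R Q))
    (Sum.elim (fun l : J => (R l).f '' Iio (Q l)) fun l : J => (R l).f '' Ioi (Q l)) ?_ ?_
  · simpa [two_mul] using this
  · rintro (⟨l, hl⟩ | ⟨l, hl⟩)
    · obtain ⟨g, hg, hgA⟩ := hQ l
      obtain ⟨t, ht, hne, htS⟩ := s.exists_ray_mem_inter (R l) hl hgA
      rw [mem_uIcc] at ht
      exact ⟨_, ⟨t, by simp only [mem_Iio]; omega, rfl⟩, htS, ray_notMem_cutSet hdisj hRD hne⟩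
    · obtain ⟨t, ht, htS⟩ := (htail l).exists_gt_mem_inter hl
      exact ⟨_, ⟨t, ht, rfl⟩, htS, ray_notMem_cutSet hdisj hRD ht.ne'⟩
  · rintro (⟨l, hl⟩ | ⟨l, hl⟩) (⟨l', hl'⟩ | ⟨l', hl'⟩) hne <;>
      refine disjoint_image_rays hdisj fun h => ?_ <;> subst h
    · exact absurd rfl hne
    · exact Ioi_disjoint_Iio_same.symm
    · exact Ioi_disjoint_Iio_same
    · exact absurd rfl hne

lemma Separation.ncard_inter_cutSet_lt (hS : (s.A ∩ s.B).Finite)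
    (hdisj : Pairwise (Disjoint on fun l => range (R l).f)) (hRD : ∀ l t, (R l).f t ∉ D)
    {Q : Fin m → ℕ} (hDB : ∀ d ∈ D, d ∈ s.B) (htail : ∀ l, HasTailIn (R l) s.B)
    (hQ : ∀ l, ∃ g ≤ Q l, (R l).f g ∉ s.A \ s.B) (hcard : (s.A ∩ s.B).ncard < D.card + m) :
    (s.A ∩ cutSet D R Q).ncard < (s.B ∩ cutSet D R Q).ncard := by
  have hswallowed : cutSet D R Q ∩ (s.A \ s.B) =
      (fun l => (R l).f (Q l)) '' {l | (R l).f (Q l) ∈ s.A \ s.B} := by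
    ext y
    constructor
    · rintro ⟨hD | ⟨l, rfl⟩, hy⟩
      · exact absurd (hDB y hD) hy.2
      · exact ⟨l, hy, rfl⟩
    · rintro ⟨l, hl, rfl⟩
      exact ⟨Or.inr ⟨l, rfl⟩, hl⟩
  refine s.ncard_inter_lt_ncard_inter (D.finite_toSet.union (finite_range _)) ?_
  rw [hswallowed, ncard_image_of_injective _ (injective_cut hdisj Q), inter_comm,
    ncard_cutSet hdisj hRD Q]
  have := s.two_mul_ncard_le_ncard_sdiff_cutSet hS hdisj hRD htail hQ
  have := ncard_inter_add_ncard_sdiff_eq_ncard (s.A ∩ s.B) (cutSet D R Q) hS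
  omega

end Cut

lemma exists_cutoffs (ω : GraphEnd G) {D : Finset V} (hD : ∀ v ∈ D, Dominates G v ω) {m : ℕ}
    {R : Fin m → GraphRay G} (hR : ∀ l, R l ∈ ω.rays)
    (hdisj : Pairwise (Disjoint on fun l => range (R l).f)) (hRD : ∀ l t, (R l).f t ∉ D) :
    ∃ Q : Fin m → ℕ, ∀ s ∈ endTangle ω, (s.1.A ∩ s.1.B).ncard < D.card + m →
      ∀ l, ∃ g ≤ Q l, (R l).f g ∉ s.1.A \ s.1.B := by
  choose fan hfan using fun (d : D) l => (hD d d.2).exists_fan (hR l) (D.card + m)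
  obtain ⟨bar, hbarR, hbar⟩ := ω.exists_bars hR (D.card + m)
  set F : Set V := (⋃ (d : D) (l) (i), {x | x ∈ (fan d l i).2.support}) ∪
    ⋃ i, {x | x ∈ (bar i).2.2.support}
  have hF : F.Finite := .union (finite_iUnion fun _ => finite_iUnion fun _ =>
    finite_iUnion fun _ => List.finite_toSet _) (finite_iUnion fun _ => List.finite_toSet _)
  choose Q hQ using fun l => (R l).exists_forall_ge_notMem hF
  refine ⟨Q, fun s hs hcard l => ?_⟩
  by_contra! hswallow
  have hF_low : ∀ t, (R l).f t ∈ F → (R l).f t ∈ s.1.A \ s.1.B :=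
    fun t ht => hswallow t (not_lt.mp fun h => hQ l t h.le ht)
  refine hcard.not_ge ?_
  by_cases hDA : ∃ d ∈ D, d ∉ s.1.A
  · obtain ⟨d, hd, hdA⟩ := hDA
    simpa using s.1.natCard_le_of_fan s.2 hdA (fun i => (fan ⟨d, hd⟩ l i).2)
      (fun i => hF_low _ (.inl (mem_iUnion₂.mpr ⟨⟨d, hd⟩, l, mem_iUnion.mpr ⟨i,
        Walk.end_mem_support _⟩⟩))) (hfan ⟨d, hd⟩ l)
  push Not at hDA
  by_cases hbarA : ∃ i, ∀ x ∈ (bar i).2.2.support, x ∈ s.1.A \ s.1.B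
  · obtain ⟨i, hi⟩ := hbarA
    refine s.1.card_add_le_of_rays s.2 (fun d hd => ⟨hDA d hd, (hD d hd).mem_B hs⟩) hdisj hRD
      fun l' => ?_
    obtain ⟨x, hx, t, rfl⟩ := hbarR i l'
    obtain ⟨t', -, ht'⟩ := (hs _ (hR l')).exists_gt_mem_inter (hi _ hx)
    exact ⟨t', ht'⟩
  · push Not at hbarA
    simpa using s.1.natCard_le_of_crossing_walks s.2 bar (fun i => by
      obtain ⟨x, hx, t, rfl⟩ := hbarR i l
      exact ⟨_, hx, hF_low t (.inr (mem_iUnion.mpr ⟨i, hx⟩))⟩) hbarA hbar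

end

/-- if `deg(ω) + dom(ω) ≥ k` then `τ_ω ∩ S⃗_k` has a relative
decider of size exactly `k`. -/
theorem decider_of_size_k {V : Type u} (G : SimpleGraph V) (ω : GraphEnd G)
    (k : ℕ) (h : DegDomGE G ω k) :
    ∃ X : Finset V, X.card = k ∧
      ∀ s ∈ endTangle ω, (s.1.A ∩ s.1.B).ncard < k →
        (s.1.A ∩ ↑X).ncard < (s.1.B ∩ ↑X).ncard := by
  classical
  obtain ⟨m, n, rfl, hdeg, D, rfl, hD⟩ := h
  obtain ⟨R, hR, hdisj, hRD⟩ := hdeg.exists_rays_avoiding D.finite_toSet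
  obtain ⟨Q, hQ⟩ := exists_cutoffs ω hD hR hdisj hRD
  set X := D ∪ Finset.univ.image fun l => (R l).f (Q l)
  have hX : (X : Set V) = cutSet D R Q := by simp [X, cutSet]
  refine ⟨X, ?_, fun s hs hcard => ?_⟩
  · rw [← ncard_coe_finset, hX, ncard_cutSet hdisj hRD Q, add_comm]
  · rw [hX]
    exact s.1.ncard_inter_cutSet_lt s.2 hdisj hRD (fun d hd => (hD d hd).mem_B hs)
      (fun l => hs _ (hR l)) (hQ s hs (by omega)) (by omega)
end
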